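/- Let A be an n×n complex matrix all of whose rows are equal. Then A is universal (the Jacobian of x ↦ x + φ(Ax) is a nonzero constant for every analytic φ) if and only if the trace of A is zero, equivalently the entries of each row sum to zero. -/

import Mathlib

open Matrix BigOperators

/-- Jacobian determinant of a map `f : ℂ^ι → ℂ^ι` at `x`. -/
noncomputable def jacDet {ι : Type*} [Fintype ι] [DecidableEq ι]
    (f : (ι → ℂ) → (ι → ℂ)) (x : ι → ℂ) : ℂ :=
  (LinearMap.toMatrix (Pi.basisFun ℂ ι) (Pi.basisFun ℂ ι)
    (fderiv ℂ f x).toLinearMap).det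

/-- The map `x ↦ x + φ(Ax)`, with `φ` applied entrywise. -/
noncomputable def phiMap {ι : Type*} [Fintype ι] (A : Matrix ι ι ℂ) (φ : ℂ → ℂ)
    (x : ι → ℂ) : ι → ℂ :=
  fun j => x j + φ (A.mulVec x j)

/-- Domain of definition of `x ↦ x + φ(Ax)` for `φ` defined on `Ω`. -/
def phiDom {ι : Type*} [Fintype ι] (A : Matrix ι ι ℂ) (Ω : Set ℂ) : Set (ι → ℂ) :=
  {x | ∀ j, A.mulVec x j ∈ Ω}

/-- `(A, φ)` is a good pair: the Jacobian of `x + φ(Ax)` is identically a nonzero constant. -/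
def IsGoodPair {ι : Type*} [Fintype ι] [DecidableEq ι]
    (A : Matrix ι ι ℂ) (Ω : Set ℂ) (φ : ℂ → ℂ) : Prop :=
  ∃ c : ℂ, c ≠ 0 ∧ ∀ x ∈ phiDom A Ω, jacDet (phiMap A φ) x = c

/-- A matrix is universal if it forms a good pair with every analytic function. -/
def IsUniversal {ι : Type*} [Fintype ι] [DecidableEq ι] (A : Matrix ι ι ℂ) : Prop :=
  ∀ (Ω : Set ℂ) (φ : ℂ → ℂ), IsOpen Ω → Ω.Nonempty → IsPreconnected Ω →
    AnalyticOn ℂ φ Ω → (phiDom A Ω).Nonempty → IsGoodPair A Ω φ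

/-- The principal minor of `A` indexed by `I`. -/
noncomputable def principalMinor {ι : Type*} [DecidableEq ι] (A : Matrix ι ι ℂ)
    (I : Finset ι) : ℂ :=
  (A.submatrix (fun i : I => (i : ι)) (fun i : I => (i : ι))).det

/-! The derivative of `x ↦ x + φ(Ax)` is `1 + diag(φ'(Ax)) A`. When all rows of `A` equal a row
`a`, every coordinate of `Ax` is `⟨a, x⟩`, so this matrix is the rank-one perturbation
`1 + φ'(⟨a, x⟩) · 𝟙 aᵀ` of the identity, whose determinant is `1 + φ'(⟨a, x⟩) tr A`. It is therefore
`1` when `tr A = 0`; conversely `φ(z) = z²` gives the Jacobian `1 + 2 ⟨a, x⟩ tr A`, which takes the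
values `1` at `x = 0` and `1 + 2 (tr A)²` at `x = 𝟙`. -/

namespace Matrix

variable {ι R : Type*} [Fintype ι]

theorem mulVec_apply_eq_of_rows_eq [NonUnitalNonAssocSemiring R] {A : Matrix ι ι R}
    (hrows : ∀ j k, A j = A k) (x : ι → R) (j k : ι) : (A *ᵥ x) j = (A *ᵥ x) k := by
  simp only [mulVec, hrows j k]

theorem trace_eq_sum_row_of_rows_eq [AddCommMonoid R] {A : Matrix ι ι R}
    (hrows : ∀ j k, A j = A k) (i : ι) :
    A.trace = ∑ k, A i k :=
  Finset.sum_congr rfl fun k _ => by rw [diag_apply, hrows k i]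

theorem det_one_add_smul_of_rows_eq [DecidableEq ι] [CommRing R] {A : Matrix ι ι R}
    (hrows : ∀ j k, A j = A k) (i : ι) (c : R) :
    (1 + c • A).det = 1 + c * A.trace := by
  have hA : c • A = replicateCol Unit (fun _ => c) * replicateRow Unit (A i) := by
    ext j k
    simp [replicateCol, replicateRow, mul_apply, hrows j i]
  rw [hA, det_one_add_replicateCol_mul_replicateRow, trace_eq_sum_row_of_rows_eq hrows i]
  simp [dotProduct, Finset.mul_sum, mul_comm]

end Matrix

open Matrix

variable {ι : Type*} [Fintype ι] [DecidableEq ι]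

theorem hasFDerivAt_phiMap (A : Matrix ι ι ℂ) {φ : ℂ → ℂ} {x : ι → ℂ}
    (hφ : ∀ j, DifferentiableAt ℂ φ ((A *ᵥ x) j)) :
    HasFDerivAt (phiMap A φ) (LinearMap.toContinuousLinearMap
      (toLin' (1 + diagonal (fun j => deriv φ ((A *ᵥ x) j)) * A))) x := by
  refine hasFDerivAt_pi'' fun j => ?_
  have hrow : HasFDerivAt (fun y : ι → ℂ => (A *ᵥ y) j)
      ((ContinuousLinearMap.proj j).comp (LinearMap.toContinuousLinearMap (toLin' A))) x :=
    ((ContinuousLinearMap.proj j).comp (LinearMap.toContinuousLinearMap (toLin' A))).hasFDerivAt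
  have hL : (ContinuousLinearMap.proj j).comp (LinearMap.toContinuousLinearMap
      (toLin' (1 + diagonal (fun j => deriv φ ((A *ᵥ x) j)) * A))) =
      ContinuousLinearMap.proj j + deriv φ ((A *ᵥ x) j) •
        (ContinuousLinearMap.proj j).comp (LinearMap.toContinuousLinearMap (toLin' A)) := by
    ext y
    simp [-mulVec_mulVec, mulVec_diagonal]
  rw [hL]
  exact (hasFDerivAt_apply j x).add ((hφ j).hasDerivAt.comp_hasFDerivAt x hrow)

theorem jacDet_phiMap (A : Matrix ι ι ℂ) {φ : ℂ → ℂ} {x : ι → ℂ}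
    (hφ : ∀ j, DifferentiableAt ℂ φ ((A *ᵥ x) j)) :
    jacDet (phiMap A φ) x = (1 + diagonal (fun j => deriv φ ((A *ᵥ x) j)) * A).det := by
  rw [jacDet, (hasFDerivAt_phiMap A hφ).fderiv, LinearMap.toMatrix_eq_toMatrix',
    LinearMap.coe_toContinuousLinearMap, LinearMap.toMatrix'_toLin']

theorem jacDet_phiMap_of_rows_eq {A : Matrix ι ι ℂ} (hrows : ∀ j k, A j = A k)
    {φ : ℂ → ℂ} {x : ι → ℂ} (i : ι) (hφ : DifferentiableAt ℂ φ ((A *ᵥ x) i)) :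
    jacDet (phiMap A φ) x = 1 + deriv φ ((A *ᵥ x) i) * A.trace := by
  have hAx : ∀ j, (A *ᵥ x) j = (A *ᵥ x) i := fun j => mulVec_apply_eq_of_rows_eq hrows x j i
  have hdiag : diagonal (fun j => deriv φ ((A *ᵥ x) j)) = deriv φ ((A *ᵥ x) i) • 1 := by
    simp only [hAx, smul_one_eq_diagonal]
  rw [jacDet_phiMap A fun j => hAx j ▸ hφ, hdiag, smul_mul, one_mul,
    det_one_add_smul_of_rows_eq hrows i]

theorem isUniversal_iff_trace_eq_zero_of_rows_eq [Nonempty ι] {A : Matrix ι ι ℂ}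
    (hrows : ∀ j k, A j = A k) : IsUniversal A ↔ A.trace = 0 := by
  obtain ⟨i⟩ := ‹Nonempty ι›
  constructor
  · intro hA
    obtain ⟨c, -, hc⟩ := hA Set.univ (· ^ 2) isOpen_univ Set.univ_nonempty isPreconnected_univ
      (fun z _ => (analyticAt_id.pow 2).analyticWithinAt) ⟨0, fun _ => trivial⟩
    have hjac : ∀ x, jacDet (phiMap A (· ^ 2)) x = 1 + 2 * (A *ᵥ x) i * A.trace := fun x => by
      simp [jacDet_phiMap_of_rows_eq hrows i (differentiableAt_pow 2)]
    have hone : (A *ᵥ fun _ => 1) i = A.trace := by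
      simp [mulVec, dotProduct, trace_eq_sum_row_of_rows_eq hrows i]
    have h0 := hc 0 fun _ => trivial
    have h1 := hc (fun _ => 1) fun _ => trivial
    rw [hjac] at h0 h1
    rw [hone] at h1
    simp only [mulVec_zero, Pi.zero_apply, mul_zero, zero_mul, add_zero] at h0
    have htr : A.trace ^ 2 = 0 := by linear_combination (h1 - h0) / 2
    exact pow_eq_zero_iff two_ne_zero |>.mp htr
  · intro htr Ω φ hΩ _ _ hφ _
    refine ⟨1, one_ne_zero, fun x hx => ?_⟩
    have hdiff : DifferentiableAt ℂ φ ((A *ᵥ x) i) :=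
      hφ.differentiableOn.differentiableAt (hΩ.mem_nhds (hx i))
    rw [jacDet_phiMap_of_rows_eq hrows i hdiff, htr, mul_zero, add_zero]

theorem stmt8 (n : ℕ) (hn : 0 < n) (A : Matrix (Fin n) (Fin n) ℂ)
    (hrows : ∀ j k : Fin n, A j = A k) :
    (IsUniversal A ↔ Matrix.trace A = 0) ∧
    (Matrix.trace A = 0 ↔ ∑ k, A ⟨0, hn⟩ k = 0) := by
  have : Nonempty (Fin n) := ⟨⟨0, hn⟩⟩
  exact ⟨isUniversal_iff_trace_eq_zero_of_rows_eq hrows,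
    by rw [trace_eq_sum_row_of_rows_eq hrows ⟨0, hn⟩]⟩
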